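/- arXiv:0804.3105 — 2 statements merged into one kernel-verified Lean document; each statement's English description precedes it below -/
import Mathlib

section
/- If every state of every component automaton A_i has at most one outgoing transition on each letter (the A_i are deterministic) and a global state s of the product is proper (no ⊤ component), and additionally the only states with outgoing transitions sharing labels across components are ⊤ states, then from s the product has at most one outgoing a-transition for each letter a. -/
/-- Asynchronous product of partial deterministic automata over a common
alphabet `Δ` (each component has at most one outgoing transition per letter). -/
def pdeltaO {n : ℕ} {A : Type*} {Q : Fin n → Type*}
    (δ : ∀ i, Q i → A → Option (Q i)) (s : ∀ i, Q i) (a : A) : Set (∀ i, Q i) :=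
  {t | ∃ i, δ i (s i) a = some (t i) ∧ ∀ j, j ≠ i → t j = s j}

/-!
A successor of `s` in the product moves exactly one component `i` along its own (unique)
`a`-transition. Since `s` is proper, almost-disjointness allows only one component to have an
`a`-transition from `s`, so `i` and hence the successor are determined.
-/

section

variable {n : ℕ} {A : Type*} {Q : Fin n → Type*} (δ : ∀ i, Q i → A → Option (Q i))

theorem mem_pdeltaO_iff {s t : ∀ i, Q i} {a : A} :
    t ∈ pdeltaO δ s a ↔ ∃ i q, δ i (s i) a = some q ∧ t = Function.update s i q := by
  simp only [pdeltaO, Set.mem_ofPred_eq, Function.eq_update_iff]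
  constructor
  · rintro ⟨i, hstep, hframe⟩
    exact ⟨i, t i, hstep, rfl, hframe⟩
  · rintro ⟨i, q, hstep, rfl, hframe⟩
    exact ⟨i, hstep, hframe⟩

theorem eq_of_isSome_of_proper {top : ∀ i, Q i} {a : A}
    (halmost : ∀ i j : Fin n, i ≠ j →
      (∃ q : Q i, q ≠ top i ∧ (δ i q a).isSome) →
      ∀ q' : Q j, q' ≠ top j → δ j q' a = none)
    {s : ∀ i, Q i} (hproper : ∀ i, s i ≠ top i) {i j : Fin n}
    (hi : (δ i (s i) a).isSome) (hj : (δ j (s j) a).isSome) : i = j := by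
  by_contra hne
  rw [halmost i j hne ⟨s i, hproper i, hi⟩ (s j) (hproper j)] at hj
  exact Bool.false_ne_true hj

end

/-- If the component automata are deterministic and the only states sharing
outgoing labels across distinct components are the `⊤` states, then from any
proper global state (no component in `⊤`) the product has at most one outgoing
`a`-transition for each letter `a`. -/
theorem proper_state_deterministic {n : ℕ} {A : Type*} {Q : Fin n → Type*}
    (δ : ∀ i, Q i → A → Option (Q i)) (top : ∀ i, Q i)
    (halmost : ∀ (a : A) (i j : Fin n), i ≠ j →
      (∃ q : Q i, q ≠ top i ∧ (δ i q a).isSome) →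
      ∀ q' : Q j, q' ≠ top j → δ j q' a = none)
    (s : ∀ i, Q i) (hproper : ∀ i, s i ≠ top i) (a : A) :
    (pdeltaO δ s a).Subsingleton := by
  intro t ht t' ht'
  obtain ⟨i, q, hq, rfl⟩ := (mem_pdeltaO_iff δ).mp ht
  obtain ⟨i', q', hq', rfl⟩ := (mem_pdeltaO_iff δ).mp ht'
  obtain rfl : i = i' :=
    eq_of_isSome_of_proper δ (halmost a) hproper (by simp [hq]) (by simp [hq'])
  obtain rfl : q = q' := Option.some_injective _ (hq.symm.trans hq')
  rfl
end

section
/- If a configuration (s, t) is reachable in (B, A_1 ⊗ ... ⊗ A_n) by some sequence ρ of product transitions that is not banal, and B is bisimilar to the product with B minimal with respect to bisimulation, then (s, t) is also reachable by a banal sequence: the banal reordering ρ' of ρ (sorting transitions by component index, preserving the relative order within each component) reaches the same product state t, and the state of B reached by ρ' equals s. -/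
inductive APath {Q A : Type*} (δ : Q → A → Set Q) : Q → List A → Q → Prop
  | nil (q : Q) : APath δ q [] q
  | cons {q q' q'' : Q} {a : A} {w : List A} :
      q' ∈ δ q a → APath δ q' w q'' → APath δ q (a :: w) q''

def IsBisim {Q1 Q2 A : Type*} (δ1 : Q1 → A → Set Q1) (δ2 : Q2 → A → Set Q2)
    (R : Q1 → Q2 → Prop) : Prop :=
  ∀ p q, R p q →
    (∀ a, ∀ p' ∈ δ1 p a, ∃ q' ∈ δ2 q a, R p' q') ∧
    (∀ a, ∀ q' ∈ δ2 q a, ∃ p' ∈ δ1 p a, R p' q')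

def Bisimilar {Q1 Q2 A : Type*} (δ1 : Q1 → A → Set Q1) (δ2 : Q2 → A → Set Q2)
    (p : Q1) (q : Q2) : Prop :=
  ∃ R, IsBisim δ1 δ2 R ∧ R p q

def pdelta {n : ℕ} {A : Type*} {Q : Fin n → Type*} (Al : Fin n → Set A)
    (δ : ∀ i, Q i → A → Q i) (s : ∀ i, Q i) (a : A) : Set (∀ i, Q i) :=
  {t | ∃ i, a ∈ Al i ∧ t i = δ i (s i) a ∧ ∀ j, j ≠ i → t j = s j}

def compDelta {n : ℕ} {A : Type*} {Q : Fin n → Type*} (Al : Fin n → Set A)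
    (δ : ∀ i, Q i → A → Q i) (i : Fin n) (s : ∀ i, Q i) (a : A) : Set (∀ i, Q i) :=
  {t | a ∈ Al i ∧ t i = δ i (s i) a ∧ ∀ j, j ≠ i → t j = s j}

/-- `t` is reachable from `s` by a banal sequence labeled by the word `w`:
a block of transitions of component `1`, then component `2`, ..., then
component `n`, with `w` the concatenation of the block labels. -/
def BanalReachW {n : ℕ} {A : Type*} {Q : Fin n → Type*} (Al : Fin n → Set A)
    (δ : ∀ i, Q i → A → Q i) (s t : ∀ i, Q i) (w : List A) : Prop :=
  ∃ (u : Fin (n + 1) → (∀ i, Q i)) (ws : Fin n → List A),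
    u 0 = s ∧ u (Fin.last n) = t ∧
    (∀ i : Fin n, APath (compDelta Al δ i) (u i.castSucc) (ws i) (u i.succ)) ∧
    w = (List.ofFn ws).flatten

/-! Steps of distinct components commute, so a run of the product can be rearranged, one step at a
time, into blocks ordered by component: a new step of component `i` is appended to the `i`-th
block, and the later blocks, which never touch component `i`, are replayed with its new value. The
rearranged word reaches the same product state `t`. Lifting both runs along the bisimulation gives
runs of `B` ending in states bisimilar to `t`; determinism of `B` identifies the first end state with
`s`, and minimality of `B` identifies the second with the first. -/

namespace APath

variable {Q A : Type*} {δ : Q → A → Set Q}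

theorem append {q q' q'' : Q} {w w' : List A} (h : APath δ q w q') (h' : APath δ q' w' q'') :
    APath δ q (w ++ w') q'' := by
  induction h with
  | nil => exact h'
  | cons hstep _ ih => exact cons hstep (ih h')

theorem mono {δ' : Q → A → Set Q} (hδ : ∀ q a, δ q a ⊆ δ' q a) {q q' : Q} {w : List A}
    (h : APath δ q w q') : APath δ' q w q' := by
  induction h with
  | nil => exact nil _
  | cons hstep _ ih => exact cons (hδ _ _ hstep) ih

theorem right_unique (hδ : ∀ q a, (δ q a).Subsingleton) {q r r' : Q} {w : List A}
    (h : APath δ q w r) (h' : APath δ q w r') : r = r' := by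
  induction h generalizing r' with
  | nil => cases h'; rfl
  | cons hstep _ ih =>
    cases h' with
    | cons hstep' h' => exact ih (hδ _ _ hstep' hstep ▸ h')

theorem flatten_ofFn {n : ℕ} {u : Fin (n + 1) → Q} {ws : Fin n → List A}
    (h : ∀ i, APath δ (u i.castSucc) (ws i) (u i.succ)) :
    APath δ (u 0) (List.ofFn ws).flatten (u (Fin.last n)) := by
  induction n with
  | zero => exact nil _
  | succ n ih =>
    rw [List.ofFn_succ, List.flatten_cons, ← Fin.succ_last]
    refine (h 0).append (ih (u := fun k => u k.succ) fun i => ?_)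
    simpa only [Fin.succ_castSucc] using h i.succ

end APath

section Bisimulation

variable {Q1 Q2 Q3 A : Type*} {δ1 : Q1 → A → Set Q1} {δ2 : Q2 → A → Set Q2}
  {δ3 : Q3 → A → Set Q3}

theorem IsBisim.flip {R : Q1 → Q2 → Prop} (hR : IsBisim δ1 δ2 R) : IsBisim δ2 δ1 (flip R) :=
  fun q p hqp => ⟨(hR p q hqp).2, (hR p q hqp).1⟩

theorem IsBisim.comp {R : Q1 → Q2 → Prop} {S : Q2 → Q3 → Prop} (hR : IsBisim δ1 δ2 R)
    (hS : IsBisim δ2 δ3 S) : IsBisim δ1 δ3 (Relation.Comp R S) := by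
  rintro p r ⟨q, hpq, hqr⟩
  constructor
  · intro a p' hp'
    obtain ⟨q', hq', hpq'⟩ := (hR p q hpq).1 a p' hp'
    obtain ⟨r', hr', hqr'⟩ := (hS q r hqr).1 a q' hq'
    exact ⟨r', hr', q', hpq', hqr'⟩
  · intro a r' hr'
    obtain ⟨q', hq', hqr'⟩ := (hS q r hqr).2 a r' hr'
    obtain ⟨p', hp', hpq'⟩ := (hR p q hpq).2 a q' hq'
    exact ⟨p', hp', q', hpq', hqr'⟩

theorem Bisimilar.symm {p : Q1} {q : Q2} (h : Bisimilar δ1 δ2 p q) : Bisimilar δ2 δ1 q p :=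
  let ⟨_, hR, hpq⟩ := h
  ⟨_, hR.flip, hpq⟩

theorem Bisimilar.trans {p : Q1} {q : Q2} {r : Q3} (hpq : Bisimilar δ1 δ2 p q)
    (hqr : Bisimilar δ2 δ3 q r) : Bisimilar δ1 δ3 p r :=
  let ⟨_, hR, hpq⟩ := hpq
  let ⟨_, hS, hqr⟩ := hqr
  ⟨_, hR.comp hS, q, hpq, hqr⟩

theorem Bisimilar.exists_apath {p : Q1} {q q' : Q2} {w : List A} (h : Bisimilar δ1 δ2 p q)
    (hq : APath δ2 q w q') : ∃ p', APath δ1 p w p' ∧ Bisimilar δ1 δ2 p' q' := by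
  obtain ⟨R, hR, hpq⟩ := h
  induction hq generalizing p with
  | nil => exact ⟨p, .nil p, R, hR, hpq⟩
  | cons hstep _ ih =>
    obtain ⟨p₁, hp₁, hR₁⟩ := (hR _ _ hpq).2 _ _ hstep
    obtain ⟨p', hp', hp'q'⟩ := ih hR₁
    exact ⟨p', .cons hp₁ hp', hp'q'⟩

end Bisimulation

theorem List.flatten_ofFn_update_append_perm {A : Type*} {n : ℕ} (ws : Fin n → List A) (i : Fin n)
    (v : List A) :
    (List.ofFn (Function.update ws i (ws i ++ v))).flatten.Perm ((List.ofFn ws).flatten ++ v) := by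
  classical
  refine List.perm_iff_count.2 fun b => ?_
  have hcount : ∀ j, (Function.update ws i (ws i ++ v) j).count b =
      (ws j).count b + if j = i then v.count b else 0 := by
    intro j
    rcases eq_or_ne j i with rfl | hj
    · simp
    · simp [hj]
  simp only [List.count_flatten, List.count_append, List.map_ofFn, List.sum_ofFn,
    Function.comp_def, hcount, Finset.sum_add_distrib, Finset.sum_ite_eq', Finset.mem_univ, if_true]

section Product

open Function

variable {n : ℕ} {A : Type*} {Q : Fin n → Type*} {Al : Fin n → Set A} {δ : ∀ i, Q i → A → Q i}

theorem mem_compDelta_iff {i : Fin n} {s t : ∀ i, Q i} {a : A} :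
    t ∈ compDelta Al δ i s a ↔ a ∈ Al i ∧ t = update s i (δ i (s i) a) := by
  rw [eq_update_iff]
  rfl

theorem mem_pdelta_iff {s t : ∀ i, Q i} {a : A} :
    t ∈ pdelta Al δ s a ↔ ∃ i, t ∈ compDelta Al δ i s a :=
  Iff.rfl

theorem APath.compDelta_apply_of_ne {i k : Fin n} (hki : k ≠ i) {s t : ∀ i, Q i} {w : List A}
    (h : APath (compDelta Al δ i) s w t) : t k = s k := by
  induction h with
  | nil => rfl
  | cons hstep _ ih => exact ih.trans (hstep.2.2 k hki)

theorem APath.compDelta_update {i j : Fin n} (hij : i ≠ j) (x : Q i) {s t : ∀ i, Q i}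
    {w : List A} (h : APath (compDelta Al δ j) s w t) :
    APath (compDelta Al δ j) (update s i x) w (update t i x) := by
  induction h with
  | nil => exact .nil _
  | cons hstep _ ih =>
    refine .cons ?_ ih
    obtain ⟨ha, rfl⟩ := mem_compDelta_iff.1 hstep
    rw [mem_compDelta_iff, update_of_ne hij.symm, update_comm hij]
    exact ⟨ha, rfl⟩

theorem BanalReachW.nil (s : ∀ i, Q i) : BanalReachW Al δ s s [] :=
  ⟨fun _ => s, fun _ => [], rfl, rfl, fun _ => .nil _, by simp⟩

theorem BanalReachW.apath {s t : ∀ i, Q i} {w : List A} (h : BanalReachW Al δ s t w) :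
    APath (pdelta Al δ) s w t := by
  obtain ⟨u, ws, rfl, rfl, hblocks, rfl⟩ := h
  exact APath.flatten_ofFn fun i => (hblocks i).mono fun _ _ _ ht => mem_pdelta_iff.2 ⟨i, ht⟩

theorem apply_succ_eq_apply_last_of_blocks {u : Fin (n + 1) → ∀ i, Q i} {ws : Fin n → List A}
    (hblocks : ∀ j, APath (compDelta Al δ j) (u j.castSucc) (ws j) (u j.succ)) (i : Fin n) :
    u i.succ i = u (Fin.last n) i := by
  suffices ∀ k, i.succ ≤ k → u k i = u (Fin.last n) i from this _ le_rfl
  intro k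
  induction k using Fin.reverseInduction with
  | last => exact fun _ => rfl
  | cast j ih =>
    intro hij
    have hlt : i < j := Fin.succ_le_castSucc_iff.1 hij
    rw [← (hblocks j).compDelta_apply_of_ne hlt.ne]
    exact ih (hij.trans Fin.castSucc_lt_succ.le)

theorem BanalReachW.snoc {s t t' : ∀ i, Q i} {v : List A} {a : A} (h : BanalReachW Al δ s t v)
    (hstep : t' ∈ pdelta Al δ t a) : ∃ v', (v ++ [a]).Perm v' ∧ BanalReachW Al δ s t' v' := by
  obtain ⟨u, ws, hu0, rfl, hblocks, rfl⟩ := h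
  obtain ⟨i, hi⟩ := mem_pdelta_iff.1 hstep
  obtain ⟨ha, rfl⟩ := mem_compDelta_iff.1 hi
  set x := δ i (u (Fin.last n) i) a
  let u' : Fin (n + 1) → ∀ i, Q i := fun k => if k ≤ i.castSucc then u k else update (u k) i x
  have hblocks' : ∀ j, APath (compDelta Al δ j) (u' j.castSucc)
      (update ws i (ws i ++ [a]) j) (u' j.succ) := by
    intro j
    rcases lt_trichotomy j i with hji | rfl | hij
    · simp only [u', Fin.castSucc_le_castSucc_iff.2 hji.le, Fin.succ_le_castSucc_iff.2 hji,
        if_true, update_of_ne hji.ne]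
      exact hblocks j
    · simp only [u', le_rfl, Fin.succ_le_castSucc_iff, lt_irrefl, if_true, if_false,
        update_self]
      refine (hblocks j).append (.cons ?_ (.nil _))
      rw [mem_compDelta_iff, apply_succ_eq_apply_last_of_blocks hblocks]
      exact ⟨ha, rfl⟩
    · simp only [u', Fin.castSucc_le_castSucc_iff, Fin.succ_le_castSucc_iff, not_le.2 hij,
        not_lt.2 hij.le, if_false, update_of_ne hij.ne']
      exact (hblocks j).compDelta_update hij.ne x
  refine ⟨_, (List.flatten_ofFn_update_append_perm ws i [a]).symm,
    u', _, ?_, ?_, hblocks', rfl⟩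
  · simp [u', hu0]
  · simp [u', not_le.2 (Fin.castSucc_lt_last i)]

theorem BanalReachW.exists_perm_of_apath {s t t' : ∀ i, Q i} {v w : List A}
    (hv : BanalReachW Al δ s t v) (hw : APath (pdelta Al δ) t w t') :
    ∃ v', (v ++ w).Perm v' ∧ BanalReachW Al δ s t' v' := by
  induction hw generalizing v with
  | nil => exact ⟨v, by simp, hv⟩
  | @cons _ _ _ a w hstep _ ih =>
    obtain ⟨v₁, hv₁, hbanal₁⟩ := hv.snoc hstep
    obtain ⟨v', hv', hbanal'⟩ := ih hbanal₁
    refine ⟨v', ?_, hbanal'⟩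
    simpa using (hv₁.append_right w).trans hv'

theorem exists_perm_banalReachW {s t : ∀ i, Q i} {w : List A} (h : APath (pdelta Al δ) s w t) :
    ∃ w', w.Perm w' ∧ BanalReachW Al δ s t w' := by
  simpa using (BanalReachW.nil s).exists_perm_of_apath h

end Product

/-- If `B` (deterministic, minimal w.r.t. bisimulation) is bisimilar to the
product and the configuration `(s, t)` is reachable by a word `w`, then `(s, t)`
is also reachable by a banal sequence: some reordering `w'` of `w` reaches `t`
banally in the product and reaches the same state `s` in `B`. -/
theorem reachable_config_banally_reachable {n : ℕ} {A QB : Type*}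
    {Q : Fin n → Type*} (Al : Fin n → Set A) (δ : ∀ i, Q i → A → Q i)
    (δB : QB → A → Set QB) (s0 : QB) (init : ∀ i, Q i)
    (hBdet : ∀ p a, (δB p a).Subsingleton)
    (hmin : ∀ s1 s2 : QB, Bisimilar δB δB s1 s2 → s1 = s2)
    (hbisim : Bisimilar δB (pdelta Al δ) s0 init)
    (w : List A) (s : QB) (t : ∀ i, Q i)
    (hB : APath δB s0 w s) (hP : APath (pdelta Al δ) init w t) :
    ∃ w' : List A, w.Perm w' ∧ BanalReachW Al δ init t w' ∧ APath δB s0 w' s := by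
  obtain ⟨w', hperm, hbanal⟩ := exists_perm_banalReachW hP
  obtain ⟨s₁, hs₁, hs₁t⟩ := hbisim.exists_apath hP
  obtain ⟨s₂, hs₂, hs₂t⟩ := hbisim.exists_apath hbanal.apath
  obtain rfl : s₁ = s := hs₁.right_unique hBdet hB
  obtain rfl : s₂ = s₁ := hmin s₂ s₁ (hs₂t.trans hs₁t.symm)
  exact ⟨w', hperm, hbanal, hs₂⟩
end
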